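/- arXiv:2108.00288 — 4 statements merged into one kernel-verified Lean document; each statement's English description precedes it below -/
import Mathlib

section
/- Let k ≥ 2. The number of natural numbers N such that both N and N + 2 lie in the interval [5, 4 + ∏_{i=1}^{k} P_i] and both N and N + 2 are coprime to ∏_{i=1}^{k} P_i is exactly ∏_{i=2}^{k} (P_i − 2). -/
/-- `P i` is the `i`-th prime number (1-indexed): `P 1 = 2`, `P 2 = 3`, `P 3 = 5`, ... -/
noncomputable def P (i : ℕ) : ℕ := Nat.nth Nat.Prime (i - 1)

/-- The `k`-th primorial, `∏_{i=1}^{k} P_i`. -/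
noncomputable def primor (k : ℕ) : ℕ := ∏ i ∈ Finset.Icc 1 k, P i

/-! The condition "`N` and `N + 2` are coprime to `M`" depends only on `N mod M`, so over any
`M` consecutive integers it is met as often as there are residues `x` with `x` and `x + 2` both
units in `ZMod M`. By the Chinese remainder theorem that count is multiplicative over the primes
dividing `M = P_1 ⋯ P_k`: modulo `2` only `x = 1` qualifies, modulo an odd prime `p` every `x`
except `0` and `-2`, i.e. `p - 2` residues. The window `[5, 2 + M]` forced by `N + 2 ≤ 4 + M` is the
complete residue system `[3, 2 + M]` minus `N = 3, 4`, which fail because `6 ∣ M`. -/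

open Finset

lemma P_prime (i : ℕ) : (P i).Prime := Nat.prime_nth_prime _

lemma P_one : P 1 = 2 := Nat.nth_prime_zero_eq_two

lemma P_two : P 2 = 3 := Nat.nth_prime_one_eq_three

lemma P_lt_P {i j : ℕ} (hi : 1 ≤ i) (hij : i < j) : P i < P j :=
  (Nat.nth_lt_nth Nat.infinite_setOfPred_prime).mpr (by omega)

lemma two_lt_P {i : ℕ} (hi : 2 ≤ i) : 2 < P i := P_one ▸ P_lt_P le_rfl hi

lemma P_dvd_primor {i k : ℕ} (hi : 1 ≤ i) (hik : i ≤ k) : P i ∣ primor k :=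
  dvd_prod_of_mem _ (mem_Icc.mpr ⟨hi, hik⟩)

lemma primor_succ (k : ℕ) : primor (k + 1) = primor k * P (k + 1) :=
  prod_Icc_succ_top (by omega) _

lemma coprime_primor_P_succ (k : ℕ) : (primor k).Coprime (P (k + 1)) :=
  Nat.Coprime.prod_left fun i hi => (Nat.coprime_primes (P_prime i) (P_prime _)).mpr
    (P_lt_P (mem_Icc.mp hi).1 (by simp at hi; omega)).ne

instance primor.neZero (k : ℕ) : NeZero (primor k) :=
  ⟨(prod_pos fun i _ => (P_prime i).pos).ne'⟩

/-- For `R = ZMod M` these are the residues `N mod M` of the prospective twin primes `(N, N + 2)`. -/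
def twinUnits (R : Type*) [Semiring R] : Set R := {x | IsUnit x ∧ IsUnit (x + 2)}

section twinUnits

variable {R S : Type*} [Semiring R] [Semiring S]

lemma RingEquiv.preimage_twinUnits (e : R ≃+* S) : e ⁻¹' twinUnits S = twinUnits R := by
  ext x
  simp only [twinUnits, Set.mem_preimage, Set.mem_ofPred_eq]
  rw [← map_ofNat e 2, ← map_add, isUnit_map_iff, isUnit_map_iff]

lemma ncard_twinUnits_congr (e : R ≃+* S) : (twinUnits R).ncard = (twinUnits S).ncard := by
  rw [← e.preimage_twinUnits, Set.ncard_preimage_of_injective_subset_range e.injective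
    (by simp [e.surjective.range_eq])]

lemma twinUnits_prod : twinUnits (R × S) = twinUnits R ×ˢ twinUnits S := by
  ext x
  simp only [twinUnits, Set.mem_ofPred_eq, Set.mem_prod, Prod.isUnit_iff, Prod.fst_add,
    Prod.snd_add, Prod.fst_ofNat, Prod.snd_ofNat]
  tauto

lemma ncard_twinUnits_prod :
    (twinUnits (R × S)).ncard = (twinUnits R).ncard * (twinUnits S).ncard := by
  rw [twinUnits_prod, Set.ncard_prod]

end twinUnits

lemma twinUnits_eq_compl {F : Type*} [DivisionRing F] : twinUnits F = {0, -2}ᶜ := by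
  ext x
  simp only [twinUnits, isUnit_iff_ne_zero, Set.mem_ofPred_eq, Set.mem_compl_iff,
    Set.mem_insert_iff, Set.mem_singleton_iff, not_or, ne_eq, add_eq_zero_iff_eq_neg]

lemma ncard_twinUnits_of_two_ne_zero {F : Type*} [DivisionRing F] [Finite F] (h2 : (2 : F) ≠ 0) :
    (twinUnits F).ncard = Nat.card F - 2 := by
  rw [twinUnits_eq_compl, Set.ncard_compl, Set.ncard_pair (by simpa [eq_comm] using h2)]

namespace ZMod

lemma ncard_twinUnits_two : (twinUnits (ZMod 2)).ncard = 1 := by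
  rw [twinUnits_eq_compl, Set.ncard_compl, show (-2 : ZMod 2) = 0 by decide]
  simp

lemma ncard_twinUnits_prime {p : ℕ} [Fact p.Prime] (hp : p ≠ 2) :
    (twinUnits (ZMod p)).ncard = p - 2 := by
  rw [ncard_twinUnits_of_two_ne_zero, Nat.card_zmod]
  exact Ring.two_ne_zero (by rwa [ZMod.ringChar_zmod_n])

lemma ncard_twinUnits_mul {m n : ℕ} (h : m.Coprime n) :
    (twinUnits (ZMod (m * n))).ncard = (twinUnits (ZMod m)).ncard * (twinUnits (ZMod n)).ncard := by
  rw [ncard_twinUnits_congr (chineseRemainder h), ncard_twinUnits_prod]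

lemma natCast_mem_twinUnits_iff {M N : ℕ} :
    (N : ZMod M) ∈ twinUnits (ZMod M) ↔ N.Coprime M ∧ (N + 2).Coprime M := by
  rw [twinUnits, Set.mem_ofPred_eq, ← isUnit_iff_coprime, ← isUnit_iff_coprime,
    Nat.cast_add, Nat.cast_ofNat]

lemma ncard_twinUnits_eq_count (M : ℕ) [NeZero M] :
    (twinUnits (ZMod M)).ncard = M.count (fun N => N.Coprime M ∧ (N + 2).Coprime M) := by
  have hrange : twinUnits (ZMod M) =
      (Nat.cast : ℕ → ZMod M) '' {N | N < M ∧ N.Coprime M ∧ (N + 2).Coprime M} := by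
    ext x
    refine ⟨fun hx => ⟨x.val, ⟨x.val_lt, ?_⟩, x.natCast_zmod_val⟩, ?_⟩
    · rwa [← natCast_mem_twinUnits_iff, x.natCast_zmod_val]
    · rintro ⟨N, ⟨-, hN⟩, rfl⟩
      exact natCast_mem_twinUnits_iff.mpr hN
  have hinj : Set.InjOn (Nat.cast : ℕ → ZMod M) {N | N < M ∧ N.Coprime M ∧ (N + 2).Coprime M} :=
    fun a ha b hb hab => by
      rw [← val_cast_of_lt ha.1, ← val_cast_of_lt hb.1, hab]
  rw [hrange, hinj.ncard_image, Nat.count_eq_card_filter_range,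
    ← Set.ncard_coe_finset]
  congr
  ext N
  simp

end ZMod

lemma card_filter_Ico_twin_coprime (a M : ℕ) [NeZero M] :
    #{N ∈ Ico a (a + M) | N.Coprime M ∧ (N + 2).Coprime M} = (twinUnits (ZMod M)).ncard := by
  rw [ZMod.ncard_twinUnits_eq_count, Nat.filter_Ico_card_eq_of_periodic]
  intro N
  simp only [add_right_comm N M 2, Nat.coprime_add_self_left]

lemma filter_Icc_twin_coprime_eq {M : ℕ} (h2 : 2 ∣ M) (h3 : 3 ∣ M) :
    {N ∈ Icc 5 (4 + M) | N + 2 ∈ Icc 5 (4 + M) ∧ N.Coprime M ∧ (N + 2).Coprime M} =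
      {N ∈ Ico 3 (3 + M) | N.Coprime M ∧ (N + 2).Coprime M} := by
  ext N
  simp only [mem_filter, mem_Icc, mem_Ico]
  have h3N : ¬ Nat.Coprime 3 M := Nat.not_coprime_of_dvd_of_dvd (by norm_num) dvd_rfl h3
  have h4N : ¬ Nat.Coprime 4 M := Nat.not_coprime_of_dvd_of_dvd (by norm_num) (by norm_num) h2
  constructor
  · rintro ⟨-, ⟨h5, hle⟩, hcop⟩
    exact ⟨⟨by omega, by omega⟩, hcop⟩
  · rintro ⟨⟨hge, hlt⟩, hcop⟩
    have h5 : 5 ≤ N := by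
      by_contra! h
      interval_cases N
      exacts [h3N hcop.1, h4N hcop.1]
    exact ⟨⟨h5, by omega⟩, ⟨by omega, by omega⟩, hcop⟩

lemma ncard_twinUnits_primor {k : ℕ} (hk : 1 ≤ k) :
    (twinUnits (ZMod (primor k))).ncard = ∏ i ∈ Icc 2 k, (P i - 2) := by
  induction k, hk using Nat.le_induction with
  | base =>
    rw [show primor 1 = 2 by simp [primor, P_one], ZMod.ncard_twinUnits_two]
    rfl
  | succ k hk ih =>
    have := Fact.mk (P_prime (k + 1))
    rw [primor_succ, ZMod.ncard_twinUnits_mul (coprime_primor_P_succ k), ih,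
      ZMod.ncard_twinUnits_prime (two_lt_P (by omega)).ne',
      prod_Icc_succ_top (by omega)]

open scoped Classical in
/-- For `k ≥ 2`, the number of naturals `N` such that both `N` and `N + 2`
lie in `[5, 4 + ∏_{i=1}^k P_i]` and both are coprime to `∏_{i=1}^k P_i` is
`∏_{i=2}^k (P_i - 2)`. -/
theorem num_prospective_twin_primes (k : ℕ) (hk : 2 ≤ k) :
    ((Finset.Icc 5 (4 + primor k)).filter
      (fun N => N + 2 ∈ Finset.Icc 5 (4 + primor k) ∧
        Nat.Coprime N (primor k) ∧ Nat.Coprime (N + 2) (primor k))).card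
      = ∏ i ∈ Finset.Icc 2 k, (P i - 2) := by
  have h2 : 2 ∣ primor k := P_one ▸ P_dvd_primor le_rfl (by omega)
  have h3 : 3 ∣ primor k := P_two ▸ P_dvd_primor (by norm_num) hk
  rw [filter_Icc_twin_coprime_eq h2 h3, card_filter_Ico_twin_coprime,
    ncard_twinUnits_primor (by omega)]
end

section
/- Let k ≥ 2. Among the natural numbers N with 5 ≤ N ≤ 4 + ∏_{i=1}^{k} P_i that are coprime to ∏_{i=1}^{k} P_i, the number of those congruent to 5 modulo 6 equals the number of those congruent to 1 modulo 6. -/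
/-! Write `M` for the primorial; since `k ≥ 2`, `6 ∣ M`. Both conditions are periodic modulo `M`,
and the window `[5, 4 + M]` has length `M`, so it may be replaced by any other window of length `M`.
The reflection `N ↦ M - N` between the windows `[1, M]` and `[0, M)` preserves coprimality to `M`
and, because `6 ∣ M`, swaps the residues `5` and `1` modulo `6`. -/

open Finset

lemma six_dvd_primor {k : ℕ} (hk : 2 ≤ k) : 6 ∣ primor k := by
  have hsub : ({1, 2} : Finset ℕ) ⊆ Icc 1 k := by
    intro i hi
    simp only [mem_insert, mem_singleton] at hi
    simp only [mem_Icc]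
    omega
  simpa [primor, P_one, P_two] using prod_dvd_prod_of_subset _ _ P hsub

namespace Nat

lemma sub_mod_eq_iff_mod_eq {M d r s x : ℕ} (hd : d ∣ M) (hx : x ≤ M) (hr : r < d) (hs : s < d)
    (hrs : d ∣ r + s) : (M - x) % d = s ↔ x % d = r := by
  have hmod {n b : ℕ} (hb : b < d) : n % d = b ↔ (n : ZMod d) = b := by
    rw [ZMod.natCast_eq_natCast_iff', mod_eq_of_lt hb]
  rw [hmod hs, hmod hr, cast_sub hx, (ZMod.natCast_eq_zero_iff M d).2 hd]
  have hrs' : (r : ZMod d) + s = 0 := by exact_mod_cast (ZMod.natCast_eq_zero_iff _ d).2 hrs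
  constructor <;> intro h <;> linear_combination -h - hrs'

lemma periodic_coprime_and_mod_eq {M d : ℕ} (hd : d ∣ M) (r : ℕ) :
    Function.Periodic (fun N => N.Coprime M ∧ N % d = r) M := by
  obtain ⟨t, rfl⟩ := hd
  intro N
  simp only [coprime_add_self_left, add_mul_mod_self_left]

theorem card_filter_coprime_mod_eq_of_dvd_add (a M d r s : ℕ) (hd : d ∣ M) (hr : r < d)
    (hs : s < d) (hrs : d ∣ r + s) :
    #{N ∈ Ico a (a + M) | N.Coprime M ∧ N % d = r} =
      #{N ∈ Ico a (a + M) | N.Coprime M ∧ N % d = s} := by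
  rw [filter_Ico_card_eq_of_periodic _ _ _ (periodic_coprime_and_mod_eq hd r),
    filter_Ico_card_eq_of_periodic _ _ _ (periodic_coprime_and_mod_eq hd s),
    ← filter_Ico_card_eq_of_periodic 1 _ _ (periodic_coprime_and_mod_eq hd r),
    count_eq_card_filter_range]
  refine card_nbij' (M - ·) (M - ·) ?_ ?_ ?_ ?_
  · intro x hx
    simp only [coe_filter, Set.mem_ofPred_eq, mem_Ico, mem_range] at hx ⊢
    refine ⟨by omega, ?_⟩
    rw [coprime_self_sub_left (by omega), sub_mod_eq_iff_mod_eq hd (by omega) hr hs hrs]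
    exact hx.2
  · intro y hy
    simp only [coe_filter, Set.mem_ofPred_eq, mem_Ico, mem_range] at hy ⊢
    refine ⟨by omega, ?_⟩
    rw [coprime_self_sub_left hy.1.le, sub_mod_eq_iff_mod_eq hd hy.1.le hs hr (by rwa [add_comm])]
    exact hy.2
  · intro x hx
    simp only [coe_filter, Set.mem_ofPred_eq, mem_Ico] at hx
    dsimp only
    omega
  · intro y hy
    simp only [coe_filter, Set.mem_ofPred_eq, mem_range] at hy
    dsimp only
    omega

end Nat

open scoped Classical in
/-- For `k ≥ 2`, among the naturals `N` with `5 ≤ N ≤ 4 + ∏_{i=1}^k P_i`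
coprime to `∏_{i=1}^k P_i`, as many are `≡ 5 (mod 6)` as are `≡ 1 (mod 6)`. -/
theorem equal_split_mod_six (k : ℕ) (hk : 2 ≤ k) :
    ((Finset.Icc 5 (4 + primor k)).filter
      (fun N => Nat.Coprime N (primor k) ∧ N % 6 = 5)).card
    = ((Finset.Icc 5 (4 + primor k)).filter
      (fun N => Nat.Coprime N (primor k) ∧ N % 6 = 1)).card := by
  have hwindow : Icc 5 (4 + primor k) = Ico 5 (5 + primor k) := by
    ext N
    simp only [mem_Icc, mem_Ico]
    omega
  rw [hwindow]
  convert Nat.card_filter_coprime_mod_eq_of_dvd_add 5 (primor k) 6 5 1 (six_dvd_primor hk)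
    (by norm_num) (by norm_num) (by norm_num)
end

section
/- Let k ≥ 2 and let N be a natural number such that both N and N + 2 are coprime to Q = ∏_{i=1}^{k} P_i. Then exactly P_{k+1} − 2 of the P_{k+1} values m with 0 ≤ m ≤ P_{k+1} − 1 are such that both N + m·Q and N + 2 + m·Q are coprime to ∏_{i=1}^{k+1} P_i. -/
open Finset

lemma P_succ_not_dvd_primor (k : ℕ) : ¬ P (k + 1) ∣ primor k := by
  intro h
  obtain ⟨i, hi, hdvd⟩ := (P_prime (k + 1)).prime.exists_mem_finset_dvd h
  have heq := Nat.nth_injective Nat.infinite_setOfPred_prime <|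
    (Nat.prime_dvd_prime_iff_eq (P_prime _) (P_prime _)).mp hdvd
  simp only [mem_Icc] at hi
  omega

lemma Nat.Coprime.add_mul_coprime_mul_prime_iff {n q p : ℕ} (hn : n.Coprime q) (hp : p.Prime)
    (m : ℕ) : (n + m * q).Coprime (q * p) ↔ (n : ZMod p) + m * q ≠ 0 := by
  rw [Nat.coprime_mul_iff_right, Nat.coprime_add_mul_right_left, Nat.coprime_comm (n := n + m * q),
    hp.coprime_iff_not_dvd, ← ZMod.natCast_eq_zero_iff]
  push_cast
  exact and_iff_right hn

lemma ZMod.card_filter_range_natCast (n : ℕ) [NeZero n] (f : ZMod n → Prop) [DecidablePred f] :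
    #((range n).filter fun m : ℕ => f m) = #{x | f x} := by
  refine card_nbij' (↑) ZMod.val ?_ ?_ ?_ ?_
  · intro m hm
    simp_all
  · intro x hx
    simp_all [ZMod.val_lt]
  · intro m hm
    exact ZMod.val_cast_of_lt (mem_range.mp (mem_filter.mp hm).1)
  · intro x _
    exact ZMod.natCast_zmod_val x

lemma card_filter_add_mul_ne_zero {F : Type*} [Field F] [Fintype F] [DecidableEq F]
    {a b q : F} (hab : a ≠ b) (hq : q ≠ 0) :
    #{x | a + x * q ≠ 0 ∧ b + x * q ≠ 0} = Fintype.card F - 2 := by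
  have : ({x | a + x * q ≠ 0 ∧ b + x * q ≠ 0} : Finset F) = univ \ {-a / q, -b / q} := by
    ext x
    simp only [mem_filter, mem_univ, true_and, mem_sdiff, mem_insert, mem_singleton, eq_div_iff hq,
      eq_neg_iff_add_eq_zero, add_comm _ a, add_comm _ b, not_or]
  rw [this, card_sdiff_of_subset (subset_univ _), card_univ, card_pair]
  intro h
  exact hab (neg_injective ((div_left_inj' hq).mp h))

open scoped Classical in
/-- For `k ≥ 2` and `N` with both `N` and `N + 2` coprime to
`Q = ∏_{i=1}^k P_i`, exactly `P_{k+1} - 2` of the values `m` with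
`0 ≤ m ≤ P_{k+1} - 1` make both `N + m·Q` and `N + 2 + m·Q` coprime to
`∏_{i=1}^{k+1} P_i`. -/
theorem propagation_of_prospective_twin_primes (k : ℕ) (hk : 2 ≤ k) (N : ℕ)
    (hN : Nat.Coprime N (primor k)) (hN2 : Nat.Coprime (N + 2) (primor k)) :
    ((Finset.range (P (k + 1))).filter
      (fun m => Nat.Coprime (N + m * primor k) (primor (k + 1)) ∧
        Nat.Coprime (N + 2 + m * primor k) (primor (k + 1)))).card
      = P (k + 1) - 2 := by
  have hp := P_prime (k + 1)
  have := Fact.mk hp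
  have hq : (primor k : ZMod (P (k + 1))) ≠ 0 := by
    rw [Ne, ZMod.natCast_eq_zero_iff]
    exact P_succ_not_dvd_primor k
  have h2 : (N : ZMod (P (k + 1))) ≠ N + 2 := by
    rw [Ne, left_eq_add, ← Nat.cast_two, ZMod.natCast_eq_zero_iff]
    exact Nat.not_dvd_of_pos_of_lt two_pos (two_lt_P (by omega))
  simp_rw [primor_succ, hN.add_mul_coprime_mul_prime_iff hp, hN2.add_mul_coprime_mul_prime_iff hp,
    Nat.cast_add, Nat.cast_ofNat]
  rw [ZMod.card_filter_range_natCast (P (k + 1))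
    (fun x => (N : ZMod (P (k + 1))) + x * primor k ≠ 0 ∧ (N + 2) + x * primor k ≠ 0),
    card_filter_add_mul_ne_zero h2 hq, ZMod.card]
end

section
/- Let 3 ≤ k ≤ k' be natural numbers. Then, as real numbers, ∏_{j=k}^{k'−1} (1 − 2/(P_j − 2)) ≥ 1 − 2/(P_k − 2) − 2·(k' − k)/P_k. -/
open Finset

theorem Finset.one_sub_sum_le_prod_one_sub {ι R : Type*} [LinearOrder ι] [CommRing R]
    [LinearOrder R] [IsStrictOrderedRing R] (s : Finset ι) (f : ι → R)
    (hf₀ : ∀ i ∈ s, 0 ≤ f i) (hf₁ : ∀ i ∈ s, f i ≤ 1) :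
    1 - ∑ i ∈ s, f i ≤ ∏ i ∈ s, (1 - f i) := by
  rw [prod_one_sub_ordered]
  gcongr with i hi
  refine mul_le_of_le_one_right (hf₀ i hi) (prod_le_one (fun j hj => ?_) fun j hj => ?_)
  · exact sub_nonneg.2 (hf₁ j (mem_filter.1 hj).1)
  · exact sub_le_self _ (hf₀ j (mem_filter.1 hj).1)

lemma P_lt_P_s13 {k j : ℕ} (hk : 1 ≤ k) (hkj : k < j) : P k < P j :=
  Nat.nth_strictMono Nat.infinite_setOfPred_prime (by omega)

lemma odd_P {k : ℕ} (hk : 2 ≤ k) : Odd (P k) := by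
  have h := P_lt_P_s13 le_rfl (show 1 < k by omega)
  rw [P_one] at h
  exact (Nat.prime_nth_prime _).odd_of_ne_two h.ne'

lemma P_add_two_le_P {k j : ℕ} (hk : 2 ≤ k) (hkj : k < j) : P k + 2 ≤ P j := by
  obtain ⟨a, ha⟩ := odd_P hk
  obtain ⟨b, hb⟩ := odd_P (hk.trans hkj.le)
  have := P_lt_P_s13 (by omega) hkj
  omega

lemma five_le_P {k : ℕ} (hk : 3 ≤ k) : 5 ≤ P k := by
  have := P_add_two_le_P le_rfl (show 2 < k by omega)
  rw [P_two] at this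
  exact this

lemma two_div_P_sub_two_le_two_div_P {k j : ℕ} (hk : 3 ≤ k) (hkj : k < j) :
    2 / ((P j : ℝ) - 2) ≤ 2 / (P k : ℝ) := by
  have h5 : (5 : ℝ) ≤ P k := by exact_mod_cast five_le_P hk
  have h2 : (P k : ℝ) + 2 ≤ P j := by exact_mod_cast P_add_two_le_P (by omega) hkj
  gcongr
  linarith

lemma sum_two_div_P_sub_two_le {k k' : ℕ} (hk : 3 ≤ k) (hkk' : k ≤ k') :
    ∑ j ∈ Ico k k', 2 / ((P j : ℝ) - 2)
      ≤ 2 / ((P k : ℝ) - 2) + 2 * ((k' : ℝ) - k) / P k := by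
  have h5 : (5 : ℝ) ≤ P k := by exact_mod_cast five_le_P hk
  obtain rfl | hlt := hkk'.eq_or_lt
  · simp only [Ico_self, sum_empty, sub_self, mul_zero, zero_div, add_zero]
    exact div_nonneg zero_le_two (by linarith)
  rw [sum_eq_sum_Ico_succ_bot hlt]
  gcongr 2 / ((P k : ℝ) - 2) + ?_
  calc ∑ j ∈ Ico (k + 1) k', 2 / ((P j : ℝ) - 2)
      ≤ #(Ico (k + 1) k') • (2 / (P k : ℝ)) :=
        sum_le_card_nsmul _ _ _ fun j hj => two_div_P_sub_two_le_two_div_P hk (mem_Ico.1 hj).1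
    _ ≤ ((k' : ℝ) - k) * (2 / P k) := by
        rw [Nat.card_Ico, nsmul_eq_mul, Nat.cast_sub (by omega), Nat.cast_succ]
        gcongr
        linarith
    _ = 2 * ((k' : ℝ) - k) / P k := by ring

/-- For `3 ≤ k ≤ k'`, as real numbers,
`∏_{j=k}^{k'-1} (1 - 2/(P_j - 2)) ≥ 1 - 2/(P_k - 2) - 2(k' - k)/P_k`. -/
theorem product_lower_bound (k k' : ℕ) (hk : 3 ≤ k) (hkk' : k ≤ k') :
    (∏ j ∈ Finset.Ico k k', (1 - 2 / ((P j : ℝ) - 2)))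
      ≥ 1 - 2 / ((P k : ℝ) - 2) - 2 * ((k' : ℝ) - (k : ℝ)) / (P k : ℝ) := by
  have h_three_le : ∀ j ∈ Ico k k', (3 : ℝ) ≤ (P j : ℝ) - 2 := fun j hj => by
    have : (5 : ℝ) ≤ P j := by exact_mod_cast five_le_P (hk.trans (mem_Ico.1 hj).1)
    linarith
  have h_prod := one_sub_sum_le_prod_one_sub (Ico k k') (fun j => 2 / ((P j : ℝ) - 2))
    (fun j hj => div_nonneg zero_le_two (by linarith [h_three_le j hj]))
    (fun j hj => (div_le_one (by linarith [h_three_le j hj])).2 (by linarith [h_three_le j hj]))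
  have h_sum := sum_two_div_P_sub_two_le hk hkk'
  linarith
end
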